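/- For every integer k with 2 ≤ k ≤ 8 and every n ≥ 0, λ_n^k < λ_{n+1}; consequently the strip approximation entropies are strictly increasing: h_n^{(k)} < h_{n+1}^{(k)} for every n ≥ 1. -/

import Mathlib

section StripAux
open Real


/-- Strict Bernoulli for natural exponents. -/
lemma bern_lt {k : ℕ} (hk : 2 ≤ k) {x : ℝ} (hx1 : -1 ≤ x) (hxne : x ≠ 0) :
    1 + (k:ℝ) * x < (1 + x) ^ k := by
  have h1 : (1:ℝ) < (k:ℝ) := by
    have : (2:ℝ) ≤ (k:ℝ) := by exact_mod_cast hk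
    linarith
  have := one_add_mul_self_lt_rpow_one_add hx1 hxne h1
  rwa [Real.rpow_natCast] at this

/-- Strict two-term weighted AM-GM in natural power form. -/
lemma amgm_lt {k : ℕ} (hk : 2 ≤ k) {a b : ℝ} (ha : 0 < a) (hb : 0 < b) (hab : a ≠ b) :
    (k:ℝ)^k * (a ^ (k-1) * b) < (((k:ℝ)-1) * a + b) ^ k := by
  have hk0 : (0:ℝ) < k := by positivity
  have hka : (0:ℝ) < (k:ℝ) * a := by positivity
  set x : ℝ := (b - a) / ((k:ℝ) * a) with hxdef
  have hxne : x ≠ 0 := by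
    intro h
    rw [hxdef, div_eq_zero_iff] at h
    rcases h with h | h
    · exact hab (by linarith)
    · linarith
  have hx1 : (-1:ℝ) ≤ x := by
    have hk1 : (1:ℝ) ≤ (k:ℝ) := by exact_mod_cast Nat.one_le_of_lt hk
    rw [hxdef, le_div_iff₀ hka]
    nlinarith [mul_nonneg (by linarith : (0:ℝ) ≤ (k:ℝ)-1) ha.le]
  have hbern : 1 + (k:ℝ) * x < (1+x)^k := bern_lt hk hx1 hxne
  have hxb : 1 + (k:ℝ) * x = b / a := by
    rw [hxdef]; field_simp; ring
  have hfac : ((k:ℝ)-1) * a + b = ((k:ℝ) * a) * (1 + x) := by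
    rw [hxdef]; field_simp; ring
  have hak : a ^ k = a ^ (k-1) * a := by
    rw [← pow_succ]; congr 1; omega
  calc (k:ℝ)^k * (a ^ (k-1) * b) = ((k:ℝ)*a)^k * (b/a) := by
        rw [mul_pow, hak]; field_simp
    _ < ((k:ℝ)*a)^k * (1+x)^k := by
        apply mul_lt_mul_of_pos_left _ (by positivity)
        rw [← hxb]; exact hbern
    _ = (((k:ℝ)-1) * a + b) ^ k := by rw [hfac, mul_pow (↑k*a) (1+x) k]

/-- Non-strict two-term weighted AM-GM in natural power form. -/
lemma amgm_le {k : ℕ} (hk : 2 ≤ k) {a b : ℝ} (ha : 0 < a) (hb : 0 < b) :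
    (k:ℝ)^k * (a ^ (k-1) * b) ≤ (((k:ℝ)-1) * a + b) ^ k := by
  rcases eq_or_ne a b with rfl | hab
  · have h1 : ((k:ℝ)-1) * a + a = (k:ℝ) * a := by ring
    have hak : a ^ k = a ^ (k-1) * a := by rw [← pow_succ]; congr 1; omega
    rw [h1, mul_pow, hak]
  · exact (amgm_lt hk ha hb hab).le

/-- The key strict Hölder-type inequality. -/
lemma key_lt {k : ℕ} (hk : 2 ≤ k) {c r : ℝ} (hc : 0 < c) (hr : 0 < r) (hcr : c * r ≠ 1) :
    (c + r ^ (k-1)) ^ k < (1 + r ^ k) ^ (k-1) * (c ^ k + 1) := by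
  have hkne : k ≠ 0 := by omega
  have hk0 : (0:ℝ) < (k:ℝ) := by positivity
  set P : ℝ := 1 + r ^ k with hPdef
  set S : ℝ := c ^ k + 1 with hSdef
  have hP : 0 < P := by rw [hPdef]; positivity
  have hS : 0 < S := by rw [hSdef]; positivity
  have hPS : 0 < P ^ (k-1) * S := by positivity
  set T : ℝ := (P ^ (k-1) * S) ^ ((k:ℝ)⁻¹) with hTdef
  have hT : 0 < T := Real.rpow_pos_of_pos hPS _
  have hTk : T ^ k = P ^ (k-1) * S := by
    rw [hTdef]
    exact Real.rpow_inv_natCast_pow hPS.le hkne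
  set A1 : ℝ := 1 / P with hA1
  set B1 : ℝ := c ^ k / S with hB1
  set A2 : ℝ := r ^ k / P with hA2
  set B2 : ℝ := 1 / S with hB2
  have hA1p : 0 < A1 := by rw [hA1]; positivity
  have hB1p : 0 < B1 := by rw [hB1]; positivity
  have hA2p : 0 < A2 := by rw [hA2]; positivity
  have hB2p : 0 < B2 := by rw [hB2]; positivity
  -- strictness: A1 ≠ B1
  have hA1B1 : A1 ≠ B1 := by
    intro h
    apply hcr
    rw [hA1, hB1, div_eq_div_iff hP.ne' hS.ne'] at h
    -- 1 * S = c^k * P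
    have hck : (c*r) ^ k = 1 := by
      rw [mul_pow]
      rw [hPdef, hSdef] at h
      nlinarith
    rcases lt_trichotomy (c*r) 1 with hlt | heq | hgt
    · exact absurd hck (by nlinarith [pow_lt_one₀ (by positivity : (0:ℝ) ≤ c*r) hlt hkne])
    · exact heq
    · exact absurd hck (by nlinarith [one_lt_pow₀ hgt hkne])
  -- first AM-GM (strict)
  have h1 : c ^ k = (A1 ^ (k-1) * B1) * T ^ k := by
    rw [hTk, hA1, hB1, div_pow, one_pow]
    field_simp
  have h2 : (r ^ (k-1)) ^ k = (A2 ^ (k-1) * B2) * T ^ k := by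
    rw [hTk, hA2, hB2, div_pow]
    have : (r ^ k) ^ (k-1) = (r ^ (k-1)) ^ k := by
      rw [← pow_mul, ← pow_mul, Nat.mul_comm]
    field_simp [this]
    exact this.symm
  set u1 : ℝ := (((k:ℝ)-1) * A1 + B1) / k with hu1
  set u2 : ℝ := (((k:ℝ)-1) * A2 + B2) / k with hu2
  have hu1p : 0 < u1 := by
    rw [hu1]
    have : (0:ℝ) ≤ (k:ℝ)-1 := by
      have : (2:ℝ) ≤ (k:ℝ) := by exact_mod_cast hk
      linarith
    positivity
  have hu2p : 0 < u2 := by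
    rw [hu2]
    have : (0:ℝ) ≤ (k:ℝ)-1 := by
      have : (2:ℝ) ≤ (k:ℝ) := by exact_mod_cast hk
      linarith
    positivity
  have hc_lt : c < u1 * T := by
    apply lt_of_pow_lt_pow_left₀ k (by positivity)
    calc c ^ k = (A1 ^ (k-1) * B1) * T ^ k := h1
      _ < ((((k:ℝ)-1) * A1 + B1) ^ k / (k:ℝ)^k) * T ^ k := by
          apply mul_lt_mul_of_pos_right _ (by positivity)
          rw [lt_div_iff₀ (by positivity)]
          calc A1 ^ (k-1) * B1 * (k:ℝ)^k = (k:ℝ)^k * (A1 ^ (k-1) * B1) := by ring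
            _ < (((k:ℝ)-1) * A1 + B1) ^ k := amgm_lt hk hA1p hB1p hA1B1
      _ = (u1 * T) ^ k := by rw [hu1, mul_pow, div_pow]
  have hs_le : r ^ (k-1) ≤ u2 * T := by
    apply le_of_pow_le_pow_left₀ hkne (by positivity)
    calc (r ^ (k-1)) ^ k = (A2 ^ (k-1) * B2) * T ^ k := h2
      _ ≤ ((((k:ℝ)-1) * A2 + B2) ^ k / (k:ℝ)^k) * T ^ k := by
          apply mul_le_mul_of_nonneg_right _ (by positivity)
          rw [le_div_iff₀ (by positivity)]
          calc A2 ^ (k-1) * B2 * (k:ℝ)^k = (k:ℝ)^k * (A2 ^ (k-1) * B2) := by ring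
            _ ≤ (((k:ℝ)-1) * A2 + B2) ^ k := amgm_le hk hA2p hB2p
      _ = (u2 * T) ^ k := by rw [hu2, mul_pow, div_pow]
  have hsum : u1 + u2 = 1 := by
    rw [hu1, hu2, hA1, hB1, hA2, hB2, hPdef, hSdef]
    field_simp
    ring
  have hcs : c + r ^ (k-1) < T := by
    calc c + r ^ (k-1) < u1 * T + u2 * T := add_lt_add_of_lt_of_le hc_lt hs_le
      _ = (u1 + u2) * T := by ring
      _ = T := by rw [hsum, one_mul]
  calc (c + r ^ (k-1)) ^ k < T ^ k := by
        apply pow_lt_pow_left₀ hcs (by positivity) hkne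
    _ = P ^ (k-1) * S := hTk

/-- `(B_n(0), B_n(1))` for hard-core labelings of the complete rooted `k`-ary tree. -/
noncomputable def Bp (k : ℕ) : ℕ → ℝ × ℝ
  | 0 => (1, 1)
  | n + 1 => (((Bp k n).1 + (Bp k n).2) ^ k, (Bp k n).1 ^ k)

/-- `B_n = B_n(0) + B_n(1)`. -/
noncomputable def Bt (k n : ℕ) : ℝ := (Bp k n).1 + (Bp k n).2

/-- `r_n = B_n(0) / B_n`. -/
noncomputable def rt (k n : ℕ) : ℝ := (Bp k n).1 / Bt k n

/-- `c_n = (1 + √(1 + 4 r_n^{k−1}))/2`. -/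
noncomputable def ct (k n : ℕ) : ℝ := (1 + Real.sqrt (1 + 4 * rt k n ^ (k - 1))) / 2

/-- `λ_n = B_n^{k−1} c_n`. -/
noncomputable def lamt (k n : ℕ) : ℝ := Bt k n ^ (k - 1) * ct k n

/-- `h_n^{(k)} = log λ_{n−1} / kⁿ`, the site-specific strip entropy (for `n ≥ 1`). -/
noncomputable def hstrip (k n : ℕ) : ℝ := Real.log (lamt k (n - 1)) / (k : ℝ) ^ n

lemma Bp_pos (k : ℕ) : ∀ n, 0 < (Bp k n).1 ∧ 0 < (Bp k n).2 := by
  intro n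
  induction n with
  | zero => simp [Bp]
  | succ n ih =>
    refine ⟨pow_pos (by linarith [ih.1, ih.2]) _, pow_pos ih.1 _⟩

lemma Bt_pos (k n : ℕ) : 0 < Bt k n := by
  have := Bp_pos k n; rw [Bt]; linarith [this.1, this.2]

lemma rt_pos (k n : ℕ) : 0 < rt k n :=
  div_pos (Bp_pos k n).1 (Bt_pos k n)

lemma rt_lt_one (k n : ℕ) : rt k n < 1 := by
  rw [rt, div_lt_one (Bt_pos k n), Bt]
  linarith [(Bp_pos k n).2]

lemma ct_gt_one (k n : ℕ) (hk : 2 ≤ k) : 1 < ct k n := by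
  rw [ct]
  have h1 : (1:ℝ) < Real.sqrt (1 + 4 * rt k n ^ (k-1)) := by
    have hp : 0 < rt k n ^ (k-1) := pow_pos (rt_pos k n) _
    nlinarith [Real.sq_sqrt (by positivity : (0:ℝ) ≤ 1 + 4 * rt k n ^ (k-1)),
      Real.sqrt_nonneg (1 + 4 * rt k n ^ (k-1))]
  linarith

lemma ct_sq (k n : ℕ) : ct k n ^ 2 = ct k n + rt k n ^ (k-1) := by
  have ht : (0:ℝ) ≤ 1 + 4 * rt k n ^ (k-1) := by
    have := (rt_pos k n).le
    positivity
  have hs := Real.sq_sqrt ht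
  rw [ct]
  field_simp
  nlinarith [hs]

lemma Bt_succ (k n : ℕ) (hk : 2 ≤ k) :
    Bt k (n+1) = Bt k n ^ k * (1 + rt k n ^ k) := by
  have hB := Bt_pos k n
  show (Bp k (n+1)).1 + (Bp k (n+1)).2 = _
  rw [Bp]
  show (Bt k n) ^ k + (Bp k n).1 ^ k = _
  rw [rt, div_pow]
  field_simp

lemma rt_succ (k n : ℕ) (hk : 2 ≤ k) :
    rt k (n+1) = 1 / (1 + rt k n ^ k) := by
  have hB := Bt_pos k n
  have hB1 := Bt_pos k (n+1)
  rw [show rt k (n+1) = (Bp k (n+1)).1 / Bt k (n+1) from rfl, Bt_succ k n hk]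
  have h1 : (Bp k (n+1)).1 = Bt k n ^ k := by rw [Bp]; rfl
  rw [h1, rt, div_pow]
  rw [div_eq_div_iff]
  · field_simp
  · have h2 : 0 < (Bp k n).1 ^ k / Bt k n ^ k := by
      apply div_pos (pow_pos (Bp_pos k n).1 _) (pow_pos hB _)
    positivity
  · have := pow_pos (rt_pos k n) k
    rw [rt, div_pow] at this
    positivity

lemma rt_ne_succ (k : ℕ) (hk : 2 ≤ k) : ∀ n, rt k n ≠ rt k (n+1) := by
  have hkne : k ≠ 0 := by omega
  have mono : ∀ x y : ℝ, 0 ≤ x → x < y → 1/(1+y^k) < 1/(1+x^k) := by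
    intro x y hx hxy
    have h1 : x^k < y^k := pow_lt_pow_left₀ hxy hx hkne
    have h2 : (0:ℝ) < 1 + x^k := by positivity
    exact one_div_lt_one_div_of_lt h2 (by linarith)
  intro n
  induction n with
  | zero =>
    have h0 : rt k 0 = 1/2 := by
      rw [rt, Bt]; simp [Bp]; norm_num
    have h1 : rt k 1 = 1/(1 + (1/2:ℝ)^k) := by
      rw [rt_succ k 0 hk, h0]
    rw [h0, h1]
    have hlt : ((1:ℝ)/2)^k < 1 := pow_lt_one₀ (by norm_num) (by norm_num) hkne
    have hp : (0:ℝ) < (1/2:ℝ)^k := by positivity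
    have : (1:ℝ)/2 < 1/(1 + (1/2:ℝ)^k) := by
      rw [div_lt_div_iff₀ (by norm_num) (by positivity)]
      linarith
    exact ne_of_lt this
  | succ n ih =>
    intro h
    have hb := rt_pos k (n+1)
    have ha := rt_pos k n
    have h1 : rt k (n+1) = 1/(1 + rt k n ^ k) := rt_succ k n hk
    have h2 : rt k (n+2) = 1/(1 + rt k (n+1) ^ k) := rt_succ k (n+1) hk
    rcases lt_trichotomy (rt k n) (rt k (n+1)) with hlt | heq | hgt
    · have := mono _ _ ha.le hlt
      rw [← h1, ← h2] at this
      rw [h] at this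
      exact lt_irrefl _ this
    · exact ih heq
    · have := mono _ _ hb.le hgt
      rw [← h1, ← h2] at this
      rw [h] at this
      exact lt_irrefl _ this

lemma ctrt_ne_one (k n : ℕ) (hk : 2 ≤ k) : ct k n * rt k n ≠ 1 := by
  intro h
  set c := ct k n
  set r := rt k n with hrdef
  have hr : 0 < r := rt_pos k n
  have hsq : c^2 = c + r^(k-1) := ct_sq k n
  have hpow : r^(k-1) * r^2 = r^(k+1) := by
    rw [← pow_add]; congr 1; omega
  have hpow2 : r * r^k = r^(k+1) := by
    rw [← pow_succ']
  have hone : (1:ℝ) = r + r^(k+1) := by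
    have h2 : (c*r)^2 = 1 := by rw [h]; norm_num
    calc (1:ℝ) = (c*r)^2 := h2.symm
      _ = c^2 * r^2 := by ring
      _ = (c + r^(k-1)) * r^2 := by rw [hsq]
      _ = (c*r)*r + r^(k-1)*r^2 := by ring
      _ = r + r^(k+1) := by rw [h, hpow]; ring
  apply rt_ne_succ k hk n
  rw [rt_succ k n hk, ← hrdef, eq_comm, div_eq_iff (by positivity)]
  rw [mul_add, mul_one, hpow2]
  linarith

lemma lamt_pos (k n : ℕ) (hk : 2 ≤ k) : 0 < lamt k n := by
  rw [lamt]
  have := ct_gt_one k n hk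
  have := Bt_pos k n
  positivity

lemma lam_step (k : ℕ) (hk : 2 ≤ k) (n : ℕ) : lamt k n ^ k < lamt k (n+1) := by
  have hkne : k ≠ 0 := by omega
  have hB := Bt_pos k n
  have hr := rt_pos k n
  have hr1 := rt_lt_one k n
  have hc := ct_gt_one k n hk
  have hc' := ct_gt_one k (n+1) hk
  set B := Bt k n
  set r := rt k n with hrdef
  set c := ct k n with hcdef
  set c' := ct k (n+1) with hc'def
  set Q : ℝ := (1 + r^k)^(k-1) with hQdef
  have hQ : 0 < Q := by rw [hQdef]; positivity
  -- reduce to c^k < Q * c'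
  have hred : c^k < Q * c' := by
    set x := c^k with hxdef
    set y := Q * c' with hydef
    have hx0 : 0 < x := by rw [hxdef]; positivity
    have hr' : rt k (n+1) ^ (k-1) = 1/Q := by
      rw [rt_succ k n hk, ← hrdef, div_pow, one_pow, hQdef]
    have hy2 : y^2 = Q * (y + 1) := by
      have hcsq : c'^2 = c' + rt k (n+1) ^ (k-1) := ct_sq k (n+1)
      rw [hr'] at hcsq
      rw [hydef]
      have : (Q*c')^2 = Q^2 * c'^2 := by ring
      rw [this, hcsq]
      field_simp
    have hyQ : Q < y := by
      rw [hydef]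
      nlinarith
    have hx2 : x^2 < Q * (x + 1) := by
      have hexp : x^2 = (c + r^(k-1))^k := by
        rw [hxdef, ← pow_mul, Nat.mul_comm, pow_mul, ct_sq k n, ← hrdef]
      rw [hexp, hxdef]
      exact key_lt hk (by positivity) hr (ctrt_ne_one k n hk)
    by_contra hle
    push_neg at hle  -- y ≤ x
    nlinarith [mul_nonneg (sub_nonneg.mpr hle) (by linarith : (0:ℝ) ≤ x + y - Q)]
  -- assemble
  have hlam1 : lamt k n ^ k = B^((k-1)*k) * c^k := by
    rw [lamt, mul_pow, ← pow_mul]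
  have hlam2 : lamt k (n+1) = B^((k-1)*k) * (Q * c') := by
    rw [lamt, Bt_succ k n hk, ← hrdef, ← hc'def, mul_pow, ← pow_mul, ← hQdef]
    ring_nf
    exact (mul_assoc _ _ _).trans (mul_comm _ _)
  rw [hlam1, hlam2]
  exact mul_lt_mul_of_pos_left hred (by positivity)


end StripAux

/-- For `2 ≤ k ≤ 8`, `λ_n^k < λ_{n+1}` for all `n ≥ 0`, and consequently the
strip approximation entropies are strictly increasing: `h_n^{(k)} < h_{n+1}^{(k)}`
for all `n ≥ 1`. -/
theorem strip_entropies_strictly_increasing (k : ℕ) (hk2 : 2 ≤ k) (hk8 : k ≤ 8) :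
    (∀ n : ℕ, lamt k n ^ k < lamt k (n + 1)) ∧
      ∀ n : ℕ, 1 ≤ n → hstrip k n < hstrip k (n + 1) := by
  refine ⟨lam_step k hk2, ?_⟩
  intro n hn
  obtain ⟨m, rfl⟩ := Nat.exists_eq_add_of_le hn
  have hk0 : (0:ℝ) < (k:ℝ) := by positivity
  have hm1 : (1 + m) - 1 = m := by omega
  have hm2 : (1 + m + 1) - 1 = m + 1 := by omega
  rw [hstrip, hstrip, hm1, hm2]
  rw [div_lt_div_iff₀ (by positivity) (by positivity)]
  have hkey : Real.log (lamt k m) * (k:ℝ) < Real.log (lamt k (m+1)) := by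
    rw [mul_comm, ← Real.log_pow]
    exact Real.log_lt_log (pow_pos (lamt_pos k m hk2) k) (lam_step k hk2 m)
  calc Real.log (lamt k m) * (k:ℝ)^(1+m+1)
      = (Real.log (lamt k m) * (k:ℝ)) * (k:ℝ)^(1+m) := by ring
    _ < Real.log (lamt k (m+1)) * (k:ℝ)^(1+m) :=
        mul_lt_mul_of_pos_right hkey (by positivity)
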